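/- Let (X,T) be a TDS and μ a T-invariant ergodic Borel probability measure on X. Then (X,T) is μ-FK-continuous if and only if there exists a Borel set H ⊆ X with μ(H) = 1 such that ρ_FK(x,y) = 0 for every x,y ∈ H. -/

import Mathlib

/-!
`ρ_FK` satisfies the triangle inequality and vanishes between a point and any point of its orbit:
shifting one orbit by `m` steps loses only `m` out of `n` positions of an `(n, δ)`-match.
Given `μ`-FK-continuity on a compact `M` with `μ M ≥ 1/2`, for each `ε` some piece of `M` of
diameter below the corresponding `δ` has positive measure, so by ergodicity almost every orbit
visits it; two such points `x, y` then have `ρ_FK(x, y) ≤ ρ_FK(Tⁿx, Tᵐy) ≤ ε`.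
Conversely, a compact subset of `H` of measure `≥ 1 - τ` (inner regularity) works for every `δ`.
-/

open Filter Topology MeasureTheory Set

namespace FKPaper

variable {X : Type*} [MetricSpace X]

/-- The maximal fit of an `(n,δ)`-match between the orbits of `x` and `z` under `T`:
the largest cardinality of the domain of an order-preserving bijection
`π : D → R`, with `D, R ⊆ {0,…,n-1}` and `dist (T^[i] x) (T^[π i] z) < δ` for `i ∈ D`. -/
noncomputable def maxFit (T : X → X) (δ : ℝ) (n : ℕ) (x z : X) : ℕ :=
  sSup {k : ℕ | ∃ i j : Fin k → ℕ, StrictMono i ∧ StrictMono j ∧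
    (∀ s, i s < n) ∧ (∀ s, j s < n) ∧ ∀ s, dist (T^[i s] x) (T^[j s] z) < δ}

/-- `f̄_{n,δ}(x,z) = 1 - (maximal fit of an (n,δ)-match of x and z)/n`. -/
noncomputable def fbarN (T : X → X) (δ : ℝ) (n : ℕ) (x z : X) : ℝ :=
  1 - (maxFit T δ n x z : ℝ) / n

/-- `f̄_δ(x,z) = limsup_{n→∞} f̄_{n,δ}(x,z)`. -/
noncomputable def fbar (T : X → X) (δ : ℝ) (x z : X) : ℝ :=
  Filter.limsup (fun n => fbarN T δ n x z) Filter.atTop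

/-- The Feldman–Katok pseudometric `ρ_FK(x,z) = inf {δ > 0 : f̄_δ(x,z) < δ}`. -/
noncomputable def rhoFK (T : X → X) (x z : X) : ℝ :=
  sInf {δ : ℝ | 0 < δ ∧ fbar T δ x z < δ}

/-- `μ`-FK-continuity. -/
def MuFKContinuous [MeasurableSpace X] (T : X → X) (μ : Measure X) : Prop :=
  ∀ τ > 0, ∃ M : Set X, IsCompact M ∧ ENNReal.ofReal (1 - τ) ≤ μ M ∧
    ∀ ε > 0, ∃ δ > 0, ∀ x ∈ M, ∀ y ∈ M, dist x y ≤ δ → rhoFK T x y ≤ ε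

end FKPaper

open FKPaper Filter Topology MeasureTheory Set

theorem Ergodic.ae_exists_iterate_mem {α : Type*} [MeasurableSpace α] {f : α → α}
    {μ : Measure α} [IsFiniteMeasure μ] (hf : Ergodic f μ) {s : Set α} (hs : MeasurableSet s)
    (hμs : μ s ≠ 0) : ∀ᵐ x ∂μ, ∃ n, f^[n] x ∈ s := by
  set U := ⋃ n : ℕ, f^[n] ⁻¹' s
  have hU : MeasurableSet U := .iUnion fun n => hf.measurable.iterate n hs
  have hfU : f ⁻¹' U ⊆ U := by
    simp only [U, preimage_iUnion, ← preimage_comp, ← Function.iterate_succ]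
    exact iUnion_subset fun n => subset_iUnion (fun n => f^[n] ⁻¹' s) (n + 1)
  rcases hf.ae_empty_or_univ_of_preimage_ae_le hU.nullMeasurableSet hfU.eventuallyLE with h | h
  · exact absurd (measure_mono_null (subset_iUnion (fun n => f^[n] ⁻¹' s) 0) (ae_eq_empty.1 h))
      hμs
  · exact h.mem_iff.mono fun x hx => by simpa [U] using hx.2 trivial

theorem MeasureTheory.exists_measurableSet_measure_eq_one_of_ae {α : Type*} [MeasurableSpace α]
    {μ : Measure α} [IsProbabilityMeasure μ] {p : α → Prop} (h : ∀ᵐ x ∂μ, p x) :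
    ∃ H, MeasurableSet H ∧ μ H = 1 ∧ ∀ x ∈ H, p x := by
  obtain ⟨t, hpt, ht, hμt⟩ := exists_measurable_superset_of_null (ae_iff.1 h)
  exact ⟨tᶜ, ht.compl, (prob_compl_eq_one_iff ht).2 hμt,
    fun x hx => not_not.1 fun hpx => hx (hpt hpx)⟩

theorem IsCompact.exists_measure_inter_ball_ne_zero {α : Type*} [PseudoMetricSpace α]
    [MeasurableSpace α] {μ : Measure α} {K : Set α} (hK : IsCompact K) (hμK : μ K ≠ 0) {r : ℝ}
    (hr : 0 < r) : ∃ c, μ (K ∩ Metric.ball c r) ≠ 0 := by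
  by_contra! h
  exact hμK (hK.measure_zero_of_nhdsWithin fun a _ =>
    ⟨K ∩ Metric.ball a r, inter_mem_nhdsWithin K (Metric.ball_mem_nhds a hr), h a⟩)

/-- Pigeonhole: the ranges of `f` and `g` share at least `k₁ + k₂ - n` values. -/
theorem exists_common_subsequence_of_strictMono {k₁ k₂ n : ℕ} {f : Fin k₁ → ℕ} {g : Fin k₂ → ℕ}
    (hf : StrictMono f) (hg : StrictMono g) (hfn : ∀ s, f s < n) (hgn : ∀ s, g s < n) :
    ∃ (m : ℕ) (a : Fin m → Fin k₁) (b : Fin m → Fin k₂),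
      StrictMono a ∧ StrictMono b ∧ (∀ t, f (a t) = g (b t)) ∧ k₁ + k₂ ≤ m + n := by
  classical
  set S := Finset.univ.image f ∩ Finset.univ.image g with hS
  have hcard : k₁ + k₂ ≤ S.card + n := by
    have hunion : Finset.univ.image f ∪ Finset.univ.image g ⊆ Finset.range n := by
      simpa [Finset.union_subset_iff, Finset.image_subset_iff] using ⟨hfn, hgn⟩
    have := Finset.card_inter_add_card_union (Finset.univ.image f) (Finset.univ.image g)
    rw [← hS, Finset.card_image_of_injective _ hf.injective,
      Finset.card_image_of_injective _ hg.injective, Finset.card_univ, Finset.card_univ,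
      Fintype.card_fin, Fintype.card_fin] at this
    have := (Finset.card_le_card hunion).trans_eq (Finset.card_range n)
    omega
  let e := S.orderEmbOfFin rfl
  have hf' (t) : ∃ s, f s = e t := by simpa using (Finset.mem_inter.1 (S.orderEmbOfFin_mem rfl t)).1
  have hg' (t) : ∃ s, g s = e t := by simpa using (Finset.mem_inter.1 (S.orderEmbOfFin_mem rfl t)).2
  choose a ha using hf'
  choose b hb using hg'
  refine ⟨S.card, a, b, fun t u htu => ?_, fun t u htu => ?_, fun t => (ha t).trans (hb t).symm,
    hcard⟩
  · exact hf.lt_iff_lt.1 (by rw [ha, ha]; exact e.strictMono htu)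
  · exact hg.lt_iff_lt.1 (by rw [hb, hb]; exact e.strictMono htu)

namespace FKPaper

variable {X : Type*} [MetricSpace X]

/-- `maxFit T δ n x z` is by definition the supremum of the `k` with
`HasMatchOfFit T δ n x z k`. -/
def HasMatchOfFit (T : X → X) (δ : ℝ) (n : ℕ) (x z : X) (k : ℕ) : Prop :=
  ∃ i j : Fin k → ℕ, StrictMono i ∧ StrictMono j ∧
    (∀ s, i s < n) ∧ (∀ s, j s < n) ∧ ∀ s, dist (T^[i s] x) (T^[j s] z) < δ

section Matches

variable {T : X → X} {δ δ₁ δ₂ : ℝ} {n k k₁ k₂ : ℕ} {x y z : X}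

theorem hasMatchOfFit_zero : HasMatchOfFit T δ n x z 0 :=
  ⟨Fin.elim0, Fin.elim0, fun s => s.elim0, fun s => s.elim0, fun s => s.elim0, fun s => s.elim0,
    fun s => s.elim0⟩

theorem HasMatchOfFit.le (h : HasMatchOfFit T δ n x z k) : k ≤ n := by
  obtain ⟨i, -, hi, -, hin, -⟩ := h
  simpa using Fintype.card_le_of_injective (fun s => (⟨i s, hin s⟩ : Fin n))
    fun a b hab => hi.injective (congrArg Fin.val hab)

theorem HasMatchOfFit.symm (h : HasMatchOfFit T δ n x z k) : HasMatchOfFit T δ n z x k := by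
  obtain ⟨i, j, hi, hj, hin, hjn, hd⟩ := h
  exact ⟨j, i, hj, hi, hjn, hin, fun s => dist_comm (T^[i s] x) _ ▸ hd s⟩

theorem HasMatchOfFit.trans (h₁ : HasMatchOfFit T δ₁ n x y k₁)
    (h₂ : HasMatchOfFit T δ₂ n y z k₂) :
    ∃ m, k₁ + k₂ ≤ m + n ∧ HasMatchOfFit T (δ₁ + δ₂) n x z m := by
  obtain ⟨i₁, j₁, hi₁, hj₁, hi₁n, hj₁n, hd₁⟩ := h₁
  obtain ⟨i₂, j₂, hi₂, hj₂, hi₂n, hj₂n, hd₂⟩ := h₂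
  obtain ⟨m, a, b, ha, hb, hab, hm⟩ := exists_common_subsequence_of_strictMono hj₁ hi₂ hj₁n hi₂n
  refine ⟨m, hm, i₁ ∘ a, j₂ ∘ b, hi₁.comp ha, hj₂.comp hb, fun t => hi₁n _, fun t => hj₂n _,
    fun t => ?_⟩
  calc dist (T^[i₁ (a t)] x) (T^[j₂ (b t)] z)
      ≤ dist (T^[i₁ (a t)] x) (T^[j₁ (a t)] y) + dist (T^[i₂ (b t)] y) (T^[j₂ (b t)] z) := by
        rw [← hab]; exact dist_triangle _ _ _
    _ < δ₁ + δ₂ := add_lt_add (hd₁ _) (hd₂ _)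

theorem hasMatchOfFit_self_iterate (hδ : 0 < δ) (m : ℕ) :
    HasMatchOfFit T δ n x (T^[m] x) (n - m) := by
  refine ⟨fun s => s + m, fun s => s, fun a b hab => Nat.add_lt_add_right hab m,
    fun a b hab => hab, fun s => by dsimp only; omega, fun s => by dsimp only; omega, fun s => ?_⟩
  rwa [← Function.iterate_add_apply, dist_self]

end Matches

section MaxFit

variable {T : X → X} {δ δ₁ δ₂ : ℝ} {n k : ℕ} {x y z : X}

theorem bddAbove_hasMatchOfFit : BddAbove {k | HasMatchOfFit T δ n x z k} :=
  ⟨n, fun _ h => h.le⟩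

theorem hasMatchOfFit_maxFit : HasMatchOfFit T δ n x z (maxFit T δ n x z) :=
  Nat.sSup_mem ⟨0, hasMatchOfFit_zero⟩ bddAbove_hasMatchOfFit

theorem HasMatchOfFit.le_maxFit (h : HasMatchOfFit T δ n x z k) : k ≤ maxFit T δ n x z :=
  le_csSup bddAbove_hasMatchOfFit h

theorem maxFit_le : maxFit T δ n x z ≤ n :=
  hasMatchOfFit_maxFit.le

theorem maxFit_comm : maxFit T δ n x z = maxFit T δ n z x :=
  le_antisymm hasMatchOfFit_maxFit.symm.le_maxFit hasMatchOfFit_maxFit.symm.le_maxFit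

theorem maxFit_add_maxFit_le :
    maxFit T δ₁ n x y + maxFit T δ₂ n y z ≤ maxFit T (δ₁ + δ₂) n x z + n := by
  obtain ⟨m, hm, h⟩ := hasMatchOfFit_maxFit.trans (hasMatchOfFit_maxFit (δ := δ₂) (x := y))
  exact hm.trans (Nat.add_le_add_right h.le_maxFit n)

theorem sub_le_maxFit_self_iterate (hδ : 0 < δ) (m : ℕ) : n - m ≤ maxFit T δ n x (T^[m] x) :=
  (hasMatchOfFit_self_iterate hδ m).le_maxFit

end MaxFit

section FBar

variable {T : X → X} {δ δ₁ δ₂ : ℝ} {n : ℕ} {x y z : X}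

theorem fbarN_nonneg : 0 ≤ fbarN T δ n x z := by
  rcases n.eq_zero_or_pos with rfl | hn
  · simp [fbarN]
  rw [fbarN, sub_nonneg, div_le_one (by positivity)]
  exact_mod_cast maxFit_le

theorem fbarN_le_one : fbarN T δ n x z ≤ 1 :=
  sub_le_self _ (by positivity)

theorem fbarN_comm : fbarN T δ n x z = fbarN T δ n z x := by
  rw [fbarN, fbarN, maxFit_comm]

theorem fbarN_add_le : fbarN T (δ₁ + δ₂) n x z ≤ fbarN T δ₁ n x y + fbarN T δ₂ n y z := by
  rcases n.eq_zero_or_pos with rfl | hn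
  · norm_num [fbarN]
  have hn' : (0 : ℝ) < n := by exact_mod_cast hn
  have h : ((maxFit T δ₁ n x y : ℝ) + maxFit T δ₂ n y z) / n
      ≤ ((maxFit T (δ₁ + δ₂) n x z : ℝ) + n) / n :=
    div_le_div_of_nonneg_right (by exact_mod_cast maxFit_add_maxFit_le) hn'.le
  rw [add_div, add_div, div_self hn'.ne'] at h
  simp only [fbarN]
  linarith

theorem fbarN_self_iterate_le (hδ : 0 < δ) (hn : 0 < n) (m : ℕ) :
    fbarN T δ n x (T^[m] x) ≤ m / n := by
  have hn' : (0 : ℝ) < n := by exact_mod_cast hn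
  have h : (n : ℝ) ≤ maxFit T δ n x (T^[m] x) + m := by
    exact_mod_cast Nat.sub_le_iff_le_add.1 (sub_le_maxFit_self_iterate (T := T) (n := n) (x := x) hδ m)
  rw [fbarN, one_sub_div hn'.ne']
  gcongr
  linarith

theorem isBoundedUnder_le_fbarN : IsBoundedUnder (· ≤ ·) atTop fun n => fbarN T δ n x z :=
  isBoundedUnder_of ⟨1, fun _ => fbarN_le_one⟩

theorem isCoboundedUnder_le_fbarN : IsCoboundedUnder (· ≤ ·) atTop fun n => fbarN T δ n x z :=
  (isBoundedUnder_of ⟨0, fun _ => fbarN_nonneg⟩).isCoboundedUnder_le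

theorem fbar_le_one : fbar T δ x z ≤ 1 :=
  limsup_le_of_le isCoboundedUnder_le_fbarN (.of_forall fun _ => fbarN_le_one)

theorem fbar_comm : fbar T δ x z = fbar T δ z x := by
  simp only [fbar, fbarN_comm (x := x)]

theorem fbar_add_le : fbar T (δ₁ + δ₂) x z ≤ fbar T δ₁ x y + fbar T δ₂ y z :=
  (limsup_le_limsup (.of_forall fun _ => fbarN_add_le) isCoboundedUnder_le_fbarN
    (isBoundedUnder_le_add isBoundedUnder_le_fbarN isBoundedUnder_le_fbarN)).trans
    (limsup_add_le (isBoundedUnder_of ⟨0, fun _ => fbarN_nonneg⟩) isBoundedUnder_le_fbarN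
      isCoboundedUnder_le_fbarN isBoundedUnder_le_fbarN)

theorem fbar_self_iterate_nonpos (hδ : 0 < δ) (m : ℕ) : fbar T δ x (T^[m] x) ≤ 0 := by
  have hlim : Tendsto (fun n : ℕ => (m : ℝ) / n) atTop (𝓝 0) :=
    tendsto_const_div_atTop_nhds_zero_nat (m : ℝ)
  calc fbar T δ x (T^[m] x) ≤ limsup (fun n : ℕ => (m : ℝ) / n) atTop :=
        limsup_le_limsup ((eventually_gt_atTop 0).mono fun _ hn => fbarN_self_iterate_le hδ hn m)
          isCoboundedUnder_le_fbarN hlim.isBoundedUnder_le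
    _ = 0 := hlim.limsup_eq

end FBar

section RhoFK

variable {T : X → X} {δ : ℝ} {x y z : X}

theorem rhoFK_nonneg : 0 ≤ rhoFK T x z :=
  Real.sInf_nonneg fun _ hδ => hδ.1.le

theorem rhoFK_le (hδ : 0 < δ) (h : fbar T δ x z < δ) : rhoFK T x z ≤ δ :=
  csInf_le ⟨0, fun _ h => h.1.le⟩ ⟨hδ, h⟩

theorem rhoFK_comm : rhoFK T x z = rhoFK T z x := by
  simp only [rhoFK, fbar_comm (x := x)]

theorem rhoFK_triangle : rhoFK T x z ≤ rhoFK T x y + rhoFK T y z := by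
  have hne : ∀ a b : X, {δ : ℝ | 0 < δ ∧ fbar T δ a b < δ}.Nonempty :=
    fun _ _ => ⟨2, two_pos, fbar_le_one.trans_lt one_lt_two⟩
  refine le_of_forall_pos_lt_add fun ε hε => ?_
  obtain ⟨δ₁, ⟨hδ₁, hfδ₁⟩, hδ₁ε⟩ :=
    exists_lt_of_csInf_lt (hne x y) (lt_add_of_pos_right (rhoFK T x y) (half_pos hε))
  obtain ⟨δ₂, ⟨hδ₂, hfδ₂⟩, hδ₂ε⟩ :=
    exists_lt_of_csInf_lt (hne y z) (lt_add_of_pos_right (rhoFK T y z) (half_pos hε))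
  have := rhoFK_le (add_pos hδ₁ hδ₂) (fbar_add_le.trans_lt (add_lt_add hfδ₁ hfδ₂))
  linarith

theorem rhoFK_eq_zero_of_fbar_nonpos (h : ∀ δ > 0, fbar T δ x z ≤ 0) : rhoFK T x z = 0 :=
  le_antisymm (le_of_forall_pos_le_add fun ε hε => by
    simpa using rhoFK_le hε ((h ε hε).trans_lt hε)) rhoFK_nonneg

theorem rhoFK_self_iterate (m : ℕ) : rhoFK T x (T^[m] x) = 0 :=
  rhoFK_eq_zero_of_fbar_nonpos fun _ hδ => fbar_self_iterate_nonpos hδ m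

theorem rhoFK_iterate_self (m : ℕ) : rhoFK T (T^[m] x) x = 0 :=
  rhoFK_comm.trans (rhoFK_self_iterate m)

theorem rhoFK_eq_zero_of_forall_rhoFK_iterate_le
    (h : ∀ ε > 0, ∃ n m : ℕ, rhoFK T (T^[n] x) (T^[m] y) ≤ ε) : rhoFK T x y = 0 := by
  refine le_antisymm (le_of_forall_pos_le_add fun ε hε => ?_) rhoFK_nonneg
  obtain ⟨n, m, hnm⟩ := h ε hε
  calc rhoFK T x y ≤ rhoFK T x (T^[n] x) + (rhoFK T (T^[n] x) (T^[m] y) + rhoFK T (T^[m] y) y) :=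
        rhoFK_triangle.trans (add_le_add le_rfl rhoFK_triangle)
    _ ≤ 0 + ε := by rw [rhoFK_self_iterate, rhoFK_iterate_self]; linarith

end RhoFK

theorem MuFKContinuous.exists_measure_eq_one_rhoFK_eq_zero [MeasurableSpace X]
    [OpensMeasurableSpace X] {T : X → X} {μ : Measure X} [IsProbabilityMeasure μ]
    (hμ : Ergodic T μ) (h : MuFKContinuous T μ) :
    ∃ H, MeasurableSet H ∧ μ H = 1 ∧ ∀ x ∈ H, ∀ y ∈ H, rhoFK T x y = 0 := by
  obtain ⟨M, hM, hμM, hMρ⟩ := h (1 / 2) one_half_pos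
  have hμM0 : μ M ≠ 0 := fun h0 => by norm_num [h0] at hμM
  choose δ hδ hδρ using fun j : ℕ => hMρ (1 / (j + 1)) Nat.one_div_pos_of_nat
  choose c hc using fun j => hM.exists_measure_inter_ball_ne_zero hμM0 (half_pos (hδ j))
  have hae : ∀ᵐ x ∂μ, ∀ j, ∃ n, T^[n] x ∈ M ∩ Metric.ball (c j) (δ j / 2) :=
    ae_all_iff.2 fun j => hμ.ae_exists_iterate_mem
      (hM.isClosed.measurableSet.inter measurableSet_ball) (hc j)
  obtain ⟨H, hH, hμH, hHvisit⟩ := exists_measurableSet_measure_eq_one_of_ae hae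
  refine ⟨H, hH, hμH, fun x hx y hy => rhoFK_eq_zero_of_forall_rhoFK_iterate_le fun ε hε => ?_⟩
  obtain ⟨j, hj⟩ := exists_nat_one_div_lt hε
  obtain ⟨n, hnM, hn⟩ := hHvisit x hx j
  obtain ⟨m, hmM, hm⟩ := hHvisit y hy j
  refine ⟨n, m, (hδρ j _ hnM _ hmM ?_).trans hj.le⟩
  calc dist (T^[n] x) (T^[m] y) ≤ dist (T^[n] x) (c j) + dist (T^[m] y) (c j) :=
        dist_triangle_right _ _ _
    _ ≤ δ j := by linarith [Metric.mem_ball.1 hn, Metric.mem_ball.1 hm]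

theorem muFKContinuous_of_measure_eq_one [MeasurableSpace X] {T : X → X} {μ : Measure X}
    [μ.InnerRegularCompactLTTop] {H : Set X} (hH : MeasurableSet H) (hμH : μ H = 1)
    (hρ : ∀ x ∈ H, ∀ y ∈ H, rhoFK T x y = 0) : MuFKContinuous T μ := by
  intro τ hτ
  obtain ⟨K, hKH, hK, hμK⟩ := hH.exists_lt_isCompact_of_ne_top (hμH ▸ ENNReal.one_ne_top)
    (r := ENNReal.ofReal (1 - τ)) (by rw [hμH]; exact ENNReal.ofReal_lt_one.2 (by linarith))
  exact ⟨K, hK, hμK.le, fun ε hε =>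
    ⟨1, one_pos, fun x hx y hy _ => (hρ x (hKH hx) y (hKH hy)).le.trans hε.le⟩⟩

end FKPaper

theorem muFKContinuous_iff_full_measure_rhoFK_zero_general {X : Type*} [MetricSpace X] [CompactSpace X]
    (T : X → X) [MeasurableSpace X] [BorelSpace X]
    (μ : Measure X) [IsProbabilityMeasure μ] (hμ : Ergodic T μ) :
    MuFKContinuous T μ ↔
      ∃ H : Set X, MeasurableSet H ∧ μ H = 1 ∧
        ∀ x ∈ H, ∀ y ∈ H, rhoFK T x y = 0 :=
  ⟨fun h => h.exists_measure_eq_one_rhoFK_eq_zero hμ,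
    fun ⟨_, hH, hμH, hρ⟩ => muFKContinuous_of_measure_eq_one hH hμH hρ⟩

/-- `μ`-FK-continuity is equivalent to the existence of a full-measure
Borel set on which `ρ_FK` vanishes. -/
theorem muFKContinuous_iff_full_measure_rhoFK_zero {X : Type*} [MetricSpace X] [CompactSpace X] [Nonempty X]
    (T : X → X) (hT : Continuous T) [MeasurableSpace X] [BorelSpace X]
    (μ : Measure X) [IsProbabilityMeasure μ] (hμ : Ergodic T μ) :
    MuFKContinuous T μ ↔
      ∃ H : Set X, MeasurableSet H ∧ μ H = 1 ∧
        ∀ x ∈ H, ∀ y ∈ H, rhoFK T x y = 0 :=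
  muFKContinuous_iff_full_measure_rhoFK_zero_general T μ hμ
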